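/- Let L/K be a separable quadratic extension of fields with nontrivial automorphism σ₀, and let h be a nondegenerate hermitian form of rank n over L/K with adjoint involution τ on A = M_n(L). Suppose (E,σ) is an étale L-algebra with involution of the second kind (σ restricts to σ₀ on L), F = E^σ has K-rank n, and there is an embedding of algebras with involution (E,σ) → (A,τ). Then det(h)·disc(E,σ)^{−1} ∈ N_{F/K}(F^×)·N_{L/K}(L^×), where disc(E,σ) = det of the hermitian trace form Tr_{E/L}(x σ(y)), both determinants taken in K^×/N_{L/K}(L^×). -/

import Mathlib

/-!
An étale `L`-algebra `E` is a finite product of finite separable field extensions of `L`. Hence its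
trace form is nondegenerate, and a faithful `E`-module `V` with `dim_L V = dim_L E` is free of
rank one: for a suitable `v`, the map `e ↦ e • v` is an isomorphism `Φ : E ≃ V`. Transported along
`Φ`, the hermitian form satisfies `h(e x, y) = h(x, σ(e) y)`, so it is determined by the linear
form `h(·, 1)` and equals `Tr_{E/L}(a x σ(y))` for some `a ∈ E`; `a` is `σ`-fixed because `h` is
hermitian and a unit because `h` is nondegenerate. The Gram matrix of `Tr_{E/L}(a x σ(y))` in a
basis `β` is the transposed matrix of multiplication by `a` times that of `Tr_{E/L}(x σ(y))`, so its
determinant is `N_{E/L}(a) · disc(E,σ)`; and it differs from the Gram matrix of `h` in the standard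
basis by a change of basis `C`, which multiplies the determinant by `det C · s(det C)`.
-/

open Module Matrix

theorem Algebra.trace_pi_single {L : Type*} [Field L] {I : Type*} [Fintype I] [DecidableEq I]
    (F : I → Type*) [∀ i, Field (F i)] [∀ i, Algebra L (F i)] [∀ i, Module.Finite L (F i)]
    (i : I) (w : F i) :
    Algebra.trace L (∀ j, F j) (Pi.single i w) = Algebra.trace L (F i) w := by
  have hmul : Algebra.lmul L (∀ j, F j) (Pi.single i w) =
      LinearMap.single L F i ∘ₗ Algebra.lmul L (F i) w ∘ₗ LinearMap.proj i := by
    refine LinearMap.ext fun x => funext fun j => ?_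
    exact (Pi.single_mul_left_apply i j w x).symm
  rw [Algebra.trace_apply, hmul, LinearMap.trace_comp_comm', LinearMap.comp_assoc,
    LinearMap.proj_comp_single_same, LinearMap.comp_id, Algebra.trace_apply]

theorem traceForm_pi_separatingLeft {L : Type*} [Field L] {I : Type*} [Fintype I]
    (F : I → Type*) [∀ i, Field (F i)] [∀ i, Algebra L (F i)] [∀ i, FiniteDimensional L (F i)]
    [∀ i, Algebra.IsSeparable L (F i)] :
    (Algebra.traceForm L (∀ i, F i)).SeparatingLeft := by
  classical
  intro x hx
  by_contra hx0
  obtain ⟨i, hi⟩ := Function.ne_iff.mp hx0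
  obtain ⟨z, hz⟩ := DFunLike.ne_iff.mp (Algebra.trace_ne_zero L (F i))
  apply hz
  have hxy : x * Pi.single i ((x i)⁻¹ * z) = Pi.single i z := by
    rw [← Pi.single_mul_right, mul_inv_cancel_left₀ hi]
  simpa [Algebra.traceForm_apply, hxy, Algebra.trace_pi_single] using
    hx (Pi.single i ((x i)⁻¹ * z))

theorem traceForm_nondegenerate_of_etale (L E : Type*) [Field L] [CommRing E] [Algebra L E]
    [Algebra.Etale L E] : (Algebra.traceForm L E).Nondegenerate := by
  obtain ⟨I, _, F, _, _, e, hF⟩ := (Algebra.Etale.iff_exists_algEquiv_prod L E).mp ‹_›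
  choose _ _ using hF
  have : Fintype I := Fintype.ofFinite I
  refine (Algebra.traceForm_isSymm (S := E) L).isRefl.nondegenerate_iff_separatingLeft.mpr
    fun x hx => ?_
  apply e.injective
  rw [map_zero]
  refine traceForm_pi_separatingLeft (L := L) F (e x) fun y => ?_
  simpa [Algebra.traceForm_apply, ← Algebra.trace_eq_of_algEquiv e] using hx (e.symm y)

theorem exists_separating_vector_pi {I : Type*} [Fintype I] [DecidableEq I] {F : I → Type*}
    [∀ i, Field (F i)] {R V : Type*} [Semiring R] [AddCommMonoid V] [Module R V]
    (ι : (∀ i, F i) →+* Module.End R V) (hι : Function.Injective ι) :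
    ∃ v : V, ∀ x, ι x v = 0 → x = 0 := by
  have hw : ∀ i, ∃ w, ι (Pi.single i 1) w ≠ 0 := fun i => by
    by_contra! h
    have : (Pi.single i 1 : ∀ j, F j) = 0 := hι ((LinearMap.ext h).trans (map_zero ι).symm)
    simpa using congr_fun this i
  choose w hw using hw
  refine ⟨∑ j, ι (Pi.single j 1) (w j), fun x hx => funext fun i => by_contra fun hxi => hw i ?_⟩
  have hproj : ι (Pi.single i (x i)) (∑ j, ι (Pi.single j 1) (w j)) =
      ι (Pi.single i (x i)) (w i) := by
    rw [map_sum, Finset.sum_eq_single i]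
    · rw [← Module.End.mul_apply, ← map_mul, ← Pi.single_mul, mul_one]
    · intro j _ hji
      rw [← Module.End.mul_apply, ← map_mul, ← Pi.single_mul_left, Pi.single_eq_of_ne hji.symm,
        mul_zero, Pi.single_zero, map_zero, LinearMap.zero_apply]
    · simp
  have hvanish : ι (Pi.single i (x i)) (∑ j, ι (Pi.single j 1) (w j)) = 0 := by
    rw [← one_mul (x i), Pi.single_mul_left, map_mul, Module.End.mul_apply, hx, map_zero]
  calc ι (Pi.single i 1) (w i) = ι (Pi.single i (x i)⁻¹) (ι (Pi.single i (x i)) (w i)) := by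
        rw [← Module.End.mul_apply, ← map_mul, ← Pi.single_mul, inv_mul_cancel₀ hxi]
    _ = 0 := by rw [← hproj, hvanish, map_zero]

theorem exists_separating_vector_of_etale {L E V : Type*} [Field L] [CommRing E] [Algebra L E]
    [Algebra.Etale L E] [AddCommGroup V] [Module L V] (ι : E →ₐ[L] Module.End L V)
    (hι : Function.Injective ι) : ∃ v : V, ∀ x, ι x v = 0 → x = 0 := by
  classical
  obtain ⟨I, _, F, _, _, e, -⟩ := (Algebra.Etale.iff_exists_algEquiv_prod L E).mp ‹_›
  have : Fintype I := Fintype.ofFinite I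
  obtain ⟨v, hv⟩ := exists_separating_vector_pi (ι.toRingHom.comp e.symm.toRingHom)
    (hι.comp e.symm.injective)
  exact ⟨v, fun x hx => e.injective ((hv (e x) (by simpa using hx)).trans (map_zero e).symm)⟩

theorem exists_bijective_apply_of_etale {L E V : Type*} [Field L] [CommRing E] [Algebra L E]
    [Module.Finite L E] [Algebra.Etale L E] [AddCommGroup V] [Module L V] [FiniteDimensional L V]
    (ι : E →ₐ[L] Module.End L V) (hι : Function.Injective ι)
    (hdim : finrank L E = finrank L V) : ∃ v : V, Function.Bijective fun e => ι e v := by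
  obtain ⟨v, hv⟩ := exists_separating_vector_of_etale ι hι
  let f := LinearMap.applyₗ v ∘ₗ ι.toLinearMap
  have hf : Function.Injective f := injective_iff_map_eq_zero f |>.mpr hv
  exact ⟨v, hf, LinearMap.injective_iff_surjective_of_finrank_eq_finrank hdim |>.mp hf⟩

theorem LinearMap.toMatrix₂_mul_basis_toMatrix_map {R M : Type*} [CommRing R] [AddCommGroup M]
    [Module R M] {ι : Type*} [Fintype ι] [DecidableEq ι] {s : R →+* R}
    (B : M →ₗ[R] M →ₛₗ[s] R) (b c : Basis ι R M) :
    (b.toMatrix c)ᵀ * LinearMap.toMatrix₂ b b B * (b.toMatrix c).map s =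
      LinearMap.toMatrix₂ c c B := by
  ext i j
  conv_rhs => rw [LinearMap.toMatrix₂_apply, ← b.sum_repr (c i), ← b.sum_repr (c j)]
  simp only [map_sum, map_smul, map_smulₛₗ, LinearMap.sum_apply, LinearMap.smul_apply,
    smul_eq_mul, Matrix.mul_apply, Matrix.transpose_apply, Matrix.map_apply,
    Basis.toMatrix_apply, LinearMap.toMatrix₂_apply, Finset.sum_mul, Finset.mul_sum]
  exact Finset.sum_congr rfl fun k _ => Finset.sum_congr rfl fun l _ => by ring

theorem LinearMap.det_toMatrix₂_eq_det_mul_det_mul {R M : Type*} [CommRing R] [AddCommGroup M]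
    [Module R M] {ι : Type*} [Fintype ι] [DecidableEq ι] {s : R →+* R}
    (B : M →ₗ[R] M →ₛₗ[s] R) (b c : Basis ι R M) :
    (LinearMap.toMatrix₂ c c B).det =
      (b.toMatrix c).det * (LinearMap.toMatrix₂ b b B).det * s (b.toMatrix c).det := by
  rw [← LinearMap.toMatrix₂_mul_basis_toMatrix_map B b c, Matrix.det_mul, Matrix.det_mul,
    Matrix.det_transpose, RingHom.map_det]
  rfl

theorem det_trace_mul_mul_eq_norm_mul {L E ι : Type*} [Field L] [CommRing E] [Algebra L E]
    [Fintype ι] [DecidableEq ι] (β : Basis ι L E) (f : E → E) (a : E) :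
    (Matrix.of fun i j => Algebra.trace L E (a * (β i * f (β j)))).det =
      Algebra.norm L a * (Matrix.of fun i j => Algebra.trace L E (β i * f (β j))).det := by
  have hmat : (Matrix.of fun i j => Algebra.trace L E (a * (β i * f (β j)))) =
      (Algebra.leftMulMatrix β a)ᵀ * Matrix.of fun i j => Algebra.trace L E (β i * f (β j)) := by
    ext i j
    rw [Matrix.of_apply, ← mul_assoc]
    conv_lhs => rw [← β.sum_repr (a * β i)]
    simp only [Finset.sum_mul, map_sum, smul_mul_assoc, map_smul, smul_eq_mul, Matrix.mul_apply,
      Matrix.transpose_apply, Algebra.leftMulMatrix_eq_repr_mul, Matrix.of_apply]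
  rw [hmat, Matrix.det_mul, Matrix.det_transpose, Algebra.norm_eq_matrix_det β]

theorem exists_det_toMatrix₂_eq_norm_mul_det {L E V ι : Type*} [Field L] [CommRing E]
    [Algebra L E] [AddCommGroup V] [Module L V] [Fintype ι] [DecidableEq ι] {s : L →+* L}
    (B : V →ₗ[L] V →ₛₗ[s] L) (e : Basis ι L V) (Φ : E ≃ₗ[L] V) (β : Basis ι L E)
    {σ : E → E} {a : E} (ha : ∀ x y, B (Φ x) (Φ y) = Algebra.trace L E (a * (x * σ y))) :
    ∃ c : L, c ≠ 0 ∧ c * (LinearMap.toMatrix₂ e e B).det * s c =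
      Algebra.norm L a * (Matrix.of fun i j => Algebra.trace L E (β i * σ (β j))).det := by
  refine ⟨(e.toMatrix (β.map Φ)).det,
    (letI := e.invertibleToMatrix (β.map Φ); isUnit_det_of_invertible _).ne_zero,
    (LinearMap.det_toMatrix₂_eq_det_mul_det_mul B e (β.map Φ)).symm.trans ?_⟩
  rw [← det_trace_mul_mul_eq_norm_mul]
  congr 1
  ext i j
  simp only [LinearMap.toMatrix₂_apply, Basis.map_apply]
  exact ha _ _

section InvariantForm

variable {L E : Type*} [Field L] [CommRing E] [Algebra L E] {s : L ≃+* L} {σ : E ≃+* E}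

theorem Algebra.trace_ringEquiv_apply
    (hσ : ∀ l, σ (algebraMap L E l) = algebraMap L E (s l)) (x : E) :
    Algebra.trace L E (σ x) = s (Algebra.trace L E x) := by
  have he : (algebraMap L E).comp (s : L →+* L) = (σ : E →+* E).comp (algebraMap L E) :=
    RingHom.ext fun l => (hσ l).symm
  rw [Algebra.trace_eq_of_equiv_equiv s σ he x, RingEquiv.apply_symm_apply]

variable (h : E →ₗ[L] E →ₛₗ[(s : L →+* L)] L) {a : E}

theorem apply_eq_self_of_isHermitian (hE : (Algebra.traceForm L E).Nondegenerate)
    (hσ : ∀ l, σ (algebraMap L E l) = algebraMap L E (s l))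
    (ha : ∀ x y, h x y = Algebra.trace L E (a * (x * σ y))) (hherm : ∀ x y, h y x = s (h x y)) :
    σ a = a := by
  refine sub_eq_zero.mp (hE.1 _ fun z => ?_)
  obtain ⟨w, rfl⟩ := σ.surjective z
  have hw : Algebra.trace L E (σ a * σ w) = Algebra.trace L E (a * σ w) := calc
    _ = s (Algebra.trace L E (a * (w * σ 1))) := by
      rw [← map_mul, Algebra.trace_ringEquiv_apply hσ, map_one, mul_one]
    _ = Algebra.trace L E (a * (1 * σ w)) := by rw [← ha, ← hherm, ha]
    _ = _ := by rw [one_mul]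
  rw [Algebra.traceForm_apply, sub_mul, map_sub, hw, sub_self]

variable [FiniteDimensional L E]

theorem exists_eq_trace_mul_mul (hE : (Algebra.traceForm L E).Nondegenerate)
    (hσσ : ∀ x, σ (σ x) = x) (hh : ∀ e x y, h (e * x) y = h x (σ e * y)) :
    ∃ a : E, ∀ x y, h x y = Algebra.trace L E (a * (x * σ y)) := by
  refine ⟨((Algebra.traceForm L E).toDual hE).symm (h.flip 1), fun x y => ?_⟩
  calc h x y = h (σ y * x) 1 := by rw [hh, hσσ, mul_one]
    _ = _ := by
      rw [mul_comm x, ← Algebra.traceForm_apply, LinearMap.BilinForm.apply_toDual_symm_apply]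
      rfl

theorem isUnit_of_separatingLeft (ha : ∀ x y, h x y = Algebra.trace L E (a * (x * σ y)))
    (hsep : h.SeparatingLeft) : IsUnit a := by
  have := IsArtinianRing.of_finite L E
  refine IsArtinianRing.isUnit_of_mem_nonZeroDivisors (mem_nonZeroDivisors_iff_right.mpr
    fun c hc => hsep c fun y => ?_)
  rw [ha, ← mul_assoc, mul_comm a, hc, zero_mul, map_zero]

end InvariantForm

universe u

theorem det_hermitian_of_embedding_general
    (K L : Type u) [Field K] [Field L] [Algebra K L]
    (s : L ≃ₐ[K] L)
    (n : ℕ)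
    (b : (Fin n → L) → (Fin n → L) → L)
    (hb_addl : ∀ x x' y, b (x + x') y = b x y + b x' y)
    (hb_addr : ∀ x y y', b x (y + y') = b x y + b x y')
    (hb_smull : ∀ (l : L) x y, b (l • x) y = l * b x y)
    (hb_smulr : ∀ (l : L) x y, b x (l • y) = s l * b x y)
    (hb_herm : ∀ x y, b y x = s (b x y))
    (hb_nd : ∀ x, (∀ y, b x y = 0) → x = 0)
    (E : Type u) [CommRing E] [Algebra L E] [Algebra K E] [IsScalarTower K L E]
    [Module.Finite L E] [Algebra.Etale L E]
    (σ : E →ₐ[K] E) (hσ : ∀ x, σ (σ x) = x)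
    (hσL : ∀ l : L, σ (algebraMap L E l) = algebraMap L E (s l))
    (β : Module.Basis (Fin n) L E)
    (ι : E →ₐ[L] Module.End L (Fin n → L)) (hinj : Function.Injective ι)
    (hcompat : ∀ (e : E) (x y : Fin n → L), b (ι e x) y = b x (ι (σ e) y)) :
    ∃ a : E, IsUnit a ∧ σ a = a ∧
      ∃ l : L, l ≠ 0 ∧
        (Matrix.of fun i j => b (Pi.single i 1) (Pi.single j 1)).det
          = Algebra.norm L a * (l * s l) *
            (Matrix.of fun i j => Algebra.trace L E (β i * σ (β j))).det := by
  let B : (Fin n → L) →ₗ[L] (Fin n → L) →ₛₗ[((s : L ≃+* L) : L →+* L)] L :=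
    LinearMap.mk₂'ₛₗ _ _ b hb_addl hb_smull hb_addr hb_smulr
  let σ' : E ≃+* E := RingEquiv.ofBijective σ (Function.Involutive.bijective hσ)
  obtain ⟨v, hv⟩ := exists_bijective_apply_of_etale ι hinj (by simp [finrank_eq_card_basis β])
  let Φ : E ≃ₗ[L] (Fin n → L) := .ofBijective (LinearMap.applyₗ v ∘ₗ ι.toLinearMap) hv
  let h := (B ∘ₗ Φ.toLinearMap).compl₂ Φ.toLinearMap
  have hE := traceForm_nondegenerate_of_etale L E
  obtain ⟨a, ha⟩ := exists_eq_trace_mul_mul (σ := σ') h hE hσ fun e x y => by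
    change b (ι (e * x) v) (ι y v) = b (ι x v) (ι (σ e * y) v)
    rw [map_mul, Module.End.mul_apply, hcompat, ← Module.End.mul_apply, ← map_mul]
  have hσa : σ a = a := apply_eq_self_of_isHermitian h hE hσL ha fun x y => hb_herm _ _
  have hh : ∀ x y, h x y = b (Φ x) (Φ y) := fun _ _ => rfl
  have hunit : IsUnit a := isUnit_of_separatingLeft h ha fun x hx => Φ.injective <|
    (hb_nd _ fun y => by simpa only [hh, Φ.apply_symm_apply] using hx (Φ.symm y)).trans
      Φ.map_zero.symm
  obtain ⟨c, hc, hdet⟩ :=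
    exists_det_toMatrix₂_eq_norm_mul_det (σ := σ) B (Pi.basisFun L (Fin n)) Φ β ha
  have hstd : LinearMap.toMatrix₂ (Pi.basisFun L (Fin n)) (Pi.basisFun L (Fin n)) B =
      Matrix.of fun i j => b (Pi.single i 1) (Pi.single j 1) := by
    ext i j
    simp only [LinearMap.toMatrix₂_apply, Pi.basisFun_apply]
    rfl
  rw [hstd, show ((s : L ≃+* L) : L →+* L) c = s c from rfl] at hdet
  refine ⟨a, hunit, hσa, c⁻¹, inv_ne_zero hc, ?_⟩
  rw [map_inv₀]
  field_simp [(map_ne_zero s).mpr hc]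
  linear_combination hdet

/-- Let `L/K` be a separable quadratic extension with nontrivial
automorphism `s`, and `h` a nondegenerate hermitian form of rank `n` over `L/K` (on
`V = L^n`), with adjoint involution `τ` on `A = End_L(V) ≅ M_n(L)`.  Suppose `(E,σ)` is an
étale `L`-algebra with involution of the second kind, `F = E^σ` of `K`-rank `n`, and there is
an embedding of algebras with involution `(E,σ) → (A,τ)`.  Then
`det(h)·disc(E,σ)⁻¹ ∈ N_{F/K}(F^×)·N_{L/K}(L^×)`, where `disc(E,σ)` is the determinant of the
hermitian trace form `Tr_{E/L}(x σ(y))` (computed in an `L`-basis `β` of `E`); concretely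
there are a `σ`-fixed unit `a ∈ E` and `l ∈ L^×` with
`det(h) = N_{E/L}(a)·(l·s(l))·disc(E,σ)`. -/
theorem det_hermitian_of_embedding
    (K L : Type u) [Field K] [Field L] [Algebra K L]
    (hKL : Module.finrank K L = 2) [Algebra.IsSeparable K L]
    (s : L ≃ₐ[K] L) (hs : s ≠ AlgEquiv.refl) (hss : ∀ l, s (s l) = l)
    (n : ℕ)
    (b : (Fin n → L) → (Fin n → L) → L)
    (hb_addl : ∀ x x' y, b (x + x') y = b x y + b x' y)
    (hb_addr : ∀ x y y', b x (y + y') = b x y + b x y')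
    (hb_smull : ∀ (l : L) x y, b (l • x) y = l * b x y)
    (hb_smulr : ∀ (l : L) x y, b x (l • y) = s l * b x y)
    (hb_herm : ∀ x y, b y x = s (b x y))
    (hb_nd : ∀ x, (∀ y, b x y = 0) → x = 0)
    (E : Type u) [CommRing E] [Algebra L E] [Algebra K E] [IsScalarTower K L E]
    [Module.Finite L E] [Algebra.Etale L E] [Module.Finite K E]
    (σ : E →ₐ[K] E) (hσ : ∀ x, σ (σ x) = x)
    (hσL : ∀ l : L, σ (algebraMap L E l) = algebraMap L E (s l))
    (hF : Module.finrank K (LinearMap.eqLocus σ.toLinearMap (LinearMap.id (R := K) (M := E))) = n)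
    (β : Module.Basis (Fin n) L E)
    (ι : E →ₐ[L] Module.End L (Fin n → L)) (hinj : Function.Injective ι)
    (hcompat : ∀ (e : E) (x y : Fin n → L), b (ι e x) y = b x (ι (σ e) y)) :
    ∃ a : E, IsUnit a ∧ σ a = a ∧
      ∃ l : L, l ≠ 0 ∧
        (Matrix.of fun i j => b (Pi.single i 1) (Pi.single j 1)).det
          = Algebra.norm L a * (l * s l) *
            (Matrix.of fun i j => Algebra.trace L E (β i * σ (β j))).det :=
  det_hermitian_of_embedding_general K L s n b hb_addl hb_addr hb_smull hb_smulr hb_herm hb_nd E σ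
    hσ hσL β ι hinj hcompat
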